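/- For any 1-chain σ of the triangulation C_n of the flat torus with mesh 2ε_n, the comass (dual) norm of σ as a current satisfies ‖σ‖_{C_1} ≤ 2√3 ‖σ‖_F / ε_n, where ‖σ‖_F is the flat norm. -/
import Mathlib


/-- For a `1`-chain `σ` of the triangulation of the flat torus with mesh `2ε`, the comass
(dual) norm of `σ` as a current is bounded by `2√3 ‖σ‖_F / ε`, where `‖σ‖_F` is the flat
norm.  Here `E` is the space of `1`-currents with its comass norm, `T` is the (finite) set
of triangles of the triangulation (each of area `√3 ε²` and boundary of length `6ε`),
`bd Δ = ∂₂ Δ` is the boundary of a `2`-chain `Δ : T → ℝ`, whose mass is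
`‖Δ‖_{C₂} = √3 ε² ∑_τ |λ_τ|`, and the flat norm is
`‖σ‖_F = inf_Δ (‖σ - ∂₂Δ‖_{C₁} + ‖Δ‖_{C₂})`. -/
theorem comass_le_flat_norm
    {E : Type*} [NormedAddCommGroup E] [NormedSpace ℝ E]
    {T : Type*} [Fintype T] [DecidableEq T]
    (ε : ℝ) (hε : 0 < ε) (hε' : ε ≤ 2 * Real.sqrt 3)
    (bd : (T → ℝ) →ₗ[ℝ] E)
    (hbd : ∀ τ : T, ‖bd (Pi.single τ 1)‖ ≤ 6 * ε)
    (σ : E) :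
    ‖σ‖ ≤ 2 * Real.sqrt 3 *
        (⨅ Δ : T → ℝ, (‖σ - bd Δ‖ + Real.sqrt 3 * ε ^ 2 * ∑ τ : T, |Δ τ|)) / ε := by
  have h3 : (0:ℝ) < Real.sqrt 3 := Real.sqrt_pos.mpr (by norm_num)
  have h33 : Real.sqrt 3 * Real.sqrt 3 = 3 := Real.mul_self_sqrt (by norm_num)
  have key : ∀ Δ : T → ℝ, ‖σ‖ * ε ≤
      2 * Real.sqrt 3 * (‖σ - bd Δ‖ + Real.sqrt 3 * ε ^ 2 * ∑ τ : T, |Δ τ|) := by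
    intro Δ
    have hdecomp : Δ = ∑ τ : T, Δ τ • (Pi.single τ 1 : T → ℝ) := by
      funext i
      simp [Finset.sum_apply, Pi.single_apply, Finset.sum_ite_eq', mul_comm]
    have hbdΔ : ‖bd Δ‖ ≤ (6 * ε) * ∑ τ : T, |Δ τ| := by
      have hmap : bd Δ = ∑ τ : T, Δ τ • bd ((Pi.single τ 1 : T → ℝ)) := by
        conv_lhs => rw [hdecomp]
        rw [map_sum]
        simp only [map_smul]
      calc ‖bd Δ‖ = ‖∑ τ : T, Δ τ • bd ((Pi.single τ 1 : T → ℝ))‖ := by rw [hmap]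
        _ ≤ ∑ τ : T, ‖Δ τ • bd ((Pi.single τ 1 : T → ℝ))‖ := norm_sum_le _ _
        _ ≤ ∑ τ : T, |Δ τ| * (6 * ε) := by
            apply Finset.sum_le_sum
            intro τ _
            rw [norm_smul, Real.norm_eq_abs]
            exact mul_le_mul_of_nonneg_left (hbd τ) (abs_nonneg _)
        _ = (6 * ε) * ∑ τ : T, |Δ τ| := by rw [Finset.mul_sum]; simp [mul_comm]
    have h1 : ‖σ‖ ≤ ‖σ - bd Δ‖ + ‖bd Δ‖ := by
      have := norm_add_le (σ - bd Δ) (bd Δ); simpa using this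
    have hS : 0 ≤ ∑ τ : T, |Δ τ| := Finset.sum_nonneg fun τ _ => abs_nonneg _
    have h2 : ‖σ‖ ≤ ‖σ - bd Δ‖ + (6 * ε) * ∑ τ : T, |Δ τ| := h1.trans (by linarith)
    have hn : 0 ≤ ‖σ - bd Δ‖ := norm_nonneg _
    have h6 : 2 * Real.sqrt 3 * (Real.sqrt 3 * ε ^ 2 * ∑ τ : T, |Δ τ|)
        = 6 * ε ^ 2 * ∑ τ : T, |Δ τ| := by
      rw [show 2 * Real.sqrt 3 * (Real.sqrt 3 * ε ^ 2 * ∑ τ : T, |Δ τ|)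
          = 2 * (Real.sqrt 3 * Real.sqrt 3) * ε ^ 2 * ∑ τ : T, |Δ τ| by ring, h33]
      ring
    nlinarith [mul_le_mul_of_nonneg_right h2 hε.le,
      mul_le_mul_of_nonneg_left hε' hn, h6]
  rw [le_div_iff₀ hε]
  have hbdd : BddBelow (Set.range fun Δ : T → ℝ =>
      ‖σ - bd Δ‖ + Real.sqrt 3 * ε ^ 2 * ∑ τ : T, |Δ τ|) := by
    refine ⟨0, ?_⟩
    rintro x ⟨Δ, rfl⟩
    have hS : 0 ≤ ∑ τ : T, |Δ τ| := Finset.sum_nonneg fun τ _ => abs_nonneg _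
    positivity
  have hc : (0:ℝ) < 2 * Real.sqrt 3 := by positivity
  have : ‖σ‖ * ε / (2 * Real.sqrt 3) ≤
      ⨅ Δ : T → ℝ, (‖σ - bd Δ‖ + Real.sqrt 3 * ε ^ 2 * ∑ τ : T, |Δ τ|) := by
    apply le_ciInf
    intro Δ
    rw [div_le_iff₀ hc]
    calc ‖σ‖ * ε ≤ _ := key Δ
      _ = _ := by ring
  calc ‖σ‖ * ε = (‖σ‖ * ε / (2 * Real.sqrt 3)) * (2 * Real.sqrt 3) := by
        field_simp
    _ ≤ _ := by
        rw [mul_comm (2 * Real.sqrt 3) _]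
        exact mul_le_mul_of_nonneg_right this hc.le
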